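/- Let a_r, w_r, w_x be constants with 0 < w_r < a_r and 0 < w_x < a_r − w_r. Define F(ψ) = 2(a_r+w_r)[arccos((ψ−w_x)/(a_r+w_r)) − arccos((ψ+w_x)/(a_r+w_r))] − 2(a_r−w_r)[arccos((ψ−w_x)/(a_r−w_r)) − arccos((ψ+w_x)/(a_r−w_r))]. Then F(0) = 4[(a_r+w_r)·arcsin(w_x/(a_r+w_r)) − (a_r−w_r)·arcsin(w_x/(a_r−w_r))] and F(0) < 0. -/
import Mathlib


open Real Set

/-- The σ-independent form of the derivative of the ring–line intersection
area with respect to the ring center radius, expressed in the ratio `ψ`. -/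
noncomputable def F (a_r w_r w_x ψ : ℝ) : ℝ :=
  2 * (a_r + w_r) * (Real.arccos ((ψ - w_x) / (a_r + w_r)) -
      Real.arccos ((ψ + w_x) / (a_r + w_r))) -
    2 * (a_r - w_r) * (Real.arccos ((ψ - w_x) / (a_r - w_r)) -
      Real.arccos ((ψ + w_x) / (a_r - w_r)))

theorem F_zero_value_and_neg (a_r w_r w_x : ℝ)
    (hw_r : 0 < w_r) (hwa : w_r < a_r) (hw_x : 0 < w_x) (hw_x' : w_x < a_r - w_r) :
    F a_r w_r w_x 0 =
        4 * ((a_r + w_r) * Real.arcsin (w_x / (a_r + w_r)) -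
          (a_r - w_r) * Real.arcsin (w_x / (a_r - w_r))) ∧
      F a_r w_r w_x 0 < 0 := by
  have hval : F a_r w_r w_x 0 =
      4 * ((a_r + w_r) * Real.arcsin (w_x / (a_r + w_r)) -
        (a_r - w_r) * Real.arcsin (w_x / (a_r - w_r))) := by
    simp only [F, Real.arccos, zero_sub, zero_add, neg_div, Real.arcsin_neg]
    ring
  refine ⟨hval, ?_⟩
  rw [hval]
  -- key: (a_r + w_r) * arcsin (w_x / (a_r + w_r)) < (a_r - w_r) * arcsin (w_x / (a_r - w_r))
  set t : ℝ := a_r - w_r with ht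
  set s : ℝ := a_r + w_r with hs
  have htpos : 0 < t := by simp [ht]; linarith
  have hspos : 0 < s := by simp [hs]; linarith
  have hts : t < s := by simp [ht, hs]; linarith
  have hu1 : w_x / t < 1 := (div_lt_one htpos).2 (by linarith)
  have hu0 : 0 < w_x / t := div_pos hw_x htpos
  set θ : ℝ := Real.arcsin (w_x / t) with hθ
  have hθpos : 0 < θ := Real.arcsin_pos.2 hu0
  have hθle : θ ≤ π / 2 := Real.arcsin_le_pi_div_two _
  set lam : ℝ := t / s with hlam
  have hlam0 : 0 < lam := div_pos htpos hspos
  have hlam1 : lam < 1 := (div_lt_one hspos).2 hts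
  have hsinθ : Real.sin θ = w_x / t :=
    Real.sin_arcsin (by linarith) hu1.le
  -- strict concavity of sin on [0, π]
  have hconc := strictConcaveOn_sin_Icc.2
    (⟨hθpos.le, hθle.trans (by linarith [Real.pi_pos])⟩ : θ ∈ Icc 0 π)
    (⟨le_rfl, Real.pi_pos.le⟩ : (0:ℝ) ∈ Icc 0 π) hθpos.ne'
    hlam0 (show (0:ℝ) < 1 - lam by linarith) (by ring)
  simp only [smul_eq_mul, mul_zero, add_zero, Real.sin_zero] at hconc
  -- hconc : lam * sin θ < sin (lam * θ)
  have hx : w_x / s = lam * Real.sin θ := by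
    rw [hsinθ, hlam]; field_simp
  have harc : Real.arcsin (w_x / s) < lam * θ := by
    rw [hx]
    calc Real.arcsin (lam * Real.sin θ) < Real.arcsin (Real.sin (lam * θ)) := by
          apply Real.strictMonoOn_arcsin ⟨?_, ?_⟩ ⟨Real.neg_one_le_sin _, Real.sin_le_one _⟩ hconc
          · nlinarith [Real.neg_one_le_sin θ]
          · nlinarith [Real.sin_le_one θ]
      _ = lam * θ := Real.arcsin_sin (by nlinarith) (by nlinarith)
  have hmain : s * Real.arcsin (w_x / s) < t * θ := by
    have := mul_lt_mul_of_pos_left harc hspos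
    calc s * Real.arcsin (w_x / s) < s * (lam * θ) := this
      _ = t * θ := by rw [hlam]; field_simp
  linarith
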